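/- arXiv:1807.04791 — 2 statements merged into one kernel-verified Lean document; each statement's English description precedes it below -/
import Mathlib

section
/- Let (A, m) be a local ring that is not Gaussian and E a nonzero A/m-vector space. Then the trivial ring extension A ⋉ E is not Gaussian. -/
/-- The content ideal of a polynomial: the ideal generated by its coefficients. -/
noncomputable def contentIdeal {R : Type*} [CommRing R] (p : Polynomial R) : Ideal R :=
  Ideal.span (Set.range p.coeff)

/-- A commutative ring is Gaussian if `c(pq) = c(p)c(q)` for all polynomials. -/
def IsGaussianRing (R : Type*) [CommRing R] : Prop :=
  ∀ p q : Polynomial R, contentIdeal (p * q) = contentIdeal p * contentIdeal q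

theorem contentIdeal_map {R S : Type*} [CommRing R] [CommRing S] (f : R →+* S)
    (p : Polynomial R) : contentIdeal (p.map f) = (contentIdeal p).map f := by
  rw [contentIdeal, contentIdeal, Ideal.map_span, ← Set.range_comp]
  congr 1
  ext n
  simp [Polynomial.coeff_map]

theorem IsGaussianRing.of_surjective {R S : Type*} [CommRing R] [CommRing S]
    (hR : IsGaussianRing R) (f : R →+* S) (hf : Function.Surjective f) : IsGaussianRing S := by
  intro p q
  obtain ⟨p, rfl⟩ := Polynomial.map_surjective f hf p
  obtain ⟨q, rfl⟩ := Polynomial.map_surjective f hf q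
  rw [← Polynomial.map_mul, contentIdeal_map, contentIdeal_map, contentIdeal_map, hR p q,
    Ideal.map_mul]

theorem trivSqZeroExt_not_gaussian_general
    (A E : Type*) [CommRing A]
    [AddCommGroup E] [Module A E] [Module Aᵐᵒᵖ E] [IsCentralScalar A E]
    (hA : ¬ IsGaussianRing A) :
    ¬ IsGaussianRing (TrivSqZeroExt A E) := fun h =>
  hA (h.of_surjective (TrivSqZeroExt.fstHom A A E).toRingHom TrivSqZeroExt.fst_surjective)

/-- if `(A, m)` is local and not Gaussian and `E` is a nonzero `A/m`-vector
space, then `A ⋉ E` is not Gaussian. -/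
theorem trivSqZeroExt_not_gaussian
    (A E : Type*) [CommRing A] [IsLocalRing A]
    [AddCommGroup E] [Module A E] [Module Aᵐᵒᵖ E] [IsCentralScalar A E]
    [Nontrivial E]
    (hkill : ∀ a ∈ IsLocalRing.maximalIdeal A, ∀ e : E, a • e = 0)
    (hA : ¬ IsGaussianRing A) :
    ¬ IsGaussianRing (TrivSqZeroExt A E) :=
  trivSqZeroExt_not_gaussian_general A E hA
end

section
/- Let (A₁, m₁) be a local ring with m₁² = 0 and E₁ a nonzero A₁/m₁-vector space. Then the trivial ring extension A := A₁ ⋉ E₁ is a Gaussian ring; moreover its maximal ideal m = m₁ ⋉ E₁ satisfies m² = 0. -/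
open scoped Polynomial
open IsLocalRing

theorem Ideal.mul_eq_zero_of_sq_eq_bot {R : Type*} [CommRing R] {I : Ideal R} (hI : I ^ 2 = ⊥)
    {a b : R} (ha : a ∈ I) (hb : b ∈ I) : a * b = 0 := by
  rw [← Ideal.mem_bot, ← hI, pow_two]
  exact Ideal.mul_mem_mul ha hb

namespace Polynomial

variable {R : Type*} [CommRing R]

theorem contentIdeal_le_iff {p : R[X]} {I : Ideal R} :
    p.contentIdeal ≤ I ↔ ∀ n, p.coeff n ∈ I := by
  refine ⟨fun h n => h (p.coeff_mem_contentIdeal n), fun h => Ideal.span_le.2 fun c hc => ?_⟩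
  obtain ⟨n, -, rfl⟩ := mem_coeffs_iff.1 hc
  exact h n

@[simp]
theorem contentIdeal_mul_X (p : R[X]) : (p * X).contentIdeal = p.contentIdeal := by
  refine le_antisymm (contentIdeal_le_iff.2 fun n => ?_) (contentIdeal_le_iff.2 fun n => ?_)
  · cases n with
    | zero => simp
    | succ n => simpa only [coeff_mul_X] using p.coeff_mem_contentIdeal n
  · rw [← coeff_mul_X]
    exact (p * X).coeff_mem_contentIdeal (n + 1)

theorem contentIdeal_le_contentIdeal_mul_of_isUnit_coeff_zero {p : R[X]} (q : R[X])
    (hp : IsUnit (p.coeff 0)) : q.contentIdeal ≤ (p * q).contentIdeal := by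
  obtain ⟨u, hu⟩ := hp
  have hq : (q : PowerSeries R) = (p : PowerSeries R).invOfUnit u * ↑(p * q) := by
    rw [coe_mul, ← mul_assoc, PowerSeries.invOfUnit_mul _ _ (by simp [hu]), one_mul]
  refine contentIdeal_le_iff.2 fun n => ?_
  rw [← coeff_coe, hq, PowerSeries.coeff_mul]
  exact Ideal.sum_mem _ fun ij _ =>
    Ideal.mul_mem_left _ _ (by rw [coeff_coe]; exact coeff_mem_contentIdeal _ _)

theorem contentIdeal_le_contentIdeal_mul_of_isUnit_coeff {p : R[X]} (q : R[X]) {k : ℕ}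
    (hk : IsUnit (p.coeff k)) (hlow : ∀ i < k, ∀ j, p.coeff i * q.coeff j = 0) :
    q.contentIdeal ≤ (p * q).contentIdeal := by
  induction k generalizing p with
  | zero => exact contentIdeal_le_contentIdeal_mul_of_isUnit_coeff_zero q hk
  | succ k ih =>
    have hC : C (p.coeff 0) * q = 0 := by
      ext j
      simpa only [coeff_C_mul, coeff_zero] using hlow 0 k.succ_pos j
    have hpq : p * q = divX p * q * X := by
      conv_lhs => rw [← divX_mul_X_add p]
      rw [add_mul, hC, add_zero, mul_right_comm]
    rw [hpq, contentIdeal_mul_X]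
    exact ih (by rwa [coeff_divX]) fun i hi j => by
      simpa only [coeff_divX] using hlow (i + 1) (by omega) j

variable [IsLocalRing R]

theorem exists_isUnit_coeff_of_not_contentIdeal_le {p : R[X]}
    (hp : ¬p.contentIdeal ≤ maximalIdeal R) : ∃ n, IsUnit (p.coeff n) := by
  simpa [contentIdeal_le_iff, mem_maximalIdeal, mem_nonunits_iff] using hp

theorem mul_contentIdeal_le_contentIdeal_mul_of_le_maximalIdeal (hm : maximalIdeal R ^ 2 = ⊥)
    (p : R[X]) {q : R[X]} (hq : q.contentIdeal ≤ maximalIdeal R) :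
    p.contentIdeal * q.contentIdeal ≤ (p * q).contentIdeal := by
  classical
  by_cases hp : p.contentIdeal ≤ maximalIdeal R
  · calc p.contentIdeal * q.contentIdeal ≤ maximalIdeal R ^ 2 := by
          rw [pow_two]; exact Ideal.mul_mono hp hq
      _ = ⊥ := hm
      _ ≤ _ := bot_le
  · have hex := exists_isUnit_coeff_of_not_contentIdeal_le hp
    refine Ideal.mul_le_right.trans
      (contentIdeal_le_contentIdeal_mul_of_isUnit_coeff q (Nat.find_spec hex) fun i hi j => ?_)
    exact Ideal.mul_eq_zero_of_sq_eq_bot hm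
      ((mem_maximalIdeal _).2 (Nat.find_min hex hi)) (contentIdeal_le_iff.1 hq j)

end Polynomial

section

variable {R : Type*} [CommRing R]

theorem contentIdeal_eq_polynomial_contentIdeal (p : R[X]) : contentIdeal p = p.contentIdeal :=
  le_antisymm (Ideal.span_le.2 <| Set.range_subset_iff.2 p.coeff_mem_contentIdeal)
    (Polynomial.contentIdeal_le_iff.2 fun n => Ideal.subset_span ⟨n, rfl⟩)

theorem isGaussianRing_iff :
    IsGaussianRing R ↔ ∀ p q : R[X], p.contentIdeal * q.contentIdeal ≤ (p * q).contentIdeal := by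
  simp only [IsGaussianRing, contentIdeal_eq_polynomial_contentIdeal]
  exact forall₂_congr fun p q =>
    ⟨fun h => h.ge, fun h => le_antisymm (p.contentIdeal_mul_le_mul_contentIdeal q) h⟩

end

theorem isGaussianRing_of_maximalIdeal_sq_eq_bot {R : Type*} [CommRing R] [IsLocalRing R]
    (hm : maximalIdeal R ^ 2 = ⊥) : IsGaussianRing R := by
  refine isGaussianRing_iff.2 fun p q => ?_
  by_cases hq : q.contentIdeal ≤ maximalIdeal R
  · exact Polynomial.mul_contentIdeal_le_contentIdeal_mul_of_le_maximalIdeal hm p hq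
  by_cases hp : p.contentIdeal ≤ maximalIdeal R
  · rw [mul_comm p, mul_comm p.contentIdeal]
    exact Polynomial.mul_contentIdeal_le_contentIdeal_mul_of_le_maximalIdeal hm q hp
  · rw [Polynomial.contentIdeal_mul_eq_top_of_contentIdeal_eq_top
      (not_imp_comm.1 le_maximalIdeal hp) (not_imp_comm.1 le_maximalIdeal hq)]
    exact le_top

namespace TrivSqZeroExt

variable {R M : Type*} [CommRing R] [IsLocalRing R] [AddCommGroup M] [Module R M]
  [Module Rᵐᵒᵖ M] [IsCentralScalar R M]

instance : IsLocalRing (TrivSqZeroExt R M) :=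
  .of_isUnit_or_isUnit_one_sub_self fun x => by
    simpa only [isUnit_iff_isUnit_fst, fst_sub, fst_one] using
      isUnit_or_isUnit_one_sub_self x.fst

theorem mem_maximalIdeal_iff {x : TrivSqZeroExt R M} :
    x ∈ maximalIdeal (TrivSqZeroExt R M) ↔ x.fst ∈ maximalIdeal R := by
  simp only [mem_maximalIdeal, mem_nonunits_iff, isUnit_iff_isUnit_fst]

theorem maximalIdeal_sq_eq_bot (hm : maximalIdeal R ^ 2 = ⊥)
    (hkill : ∀ a ∈ maximalIdeal R, ∀ m : M, a • m = 0) :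
    maximalIdeal (TrivSqZeroExt R M) ^ 2 = ⊥ := by
  rw [pow_two, eq_bot_iff, Ideal.mul_le]
  intro x hx y hy
  rw [mem_maximalIdeal_iff] at hx hy
  rw [Ideal.mem_bot]
  ext
  · exact Ideal.mul_eq_zero_of_sq_eq_bot hm hx hy
  · rw [snd_mul, op_smul_eq_smul, hkill _ hx, hkill _ hy, add_zero, snd_zero]

end TrivSqZeroExt

theorem trivSqZeroExt_gaussian_of_sq_zero_general
    (A₁ E₁ : Type*) [CommRing A₁] [IsLocalRing A₁]
    [AddCommGroup E₁] [Module A₁ E₁] [Module A₁ᵐᵒᵖ E₁] [IsCentralScalar A₁ E₁]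
    (hkill : ∀ a ∈ IsLocalRing.maximalIdeal A₁, ∀ e : E₁, a • e = 0)
    (hm : (IsLocalRing.maximalIdeal A₁) ^ 2 = ⊥) :
    IsGaussianRing (TrivSqZeroExt A₁ E₁) ∧
      ∀ M : Ideal (TrivSqZeroExt A₁ E₁), M.IsMaximal →
        (M : Set (TrivSqZeroExt A₁ E₁)) =
          {x | x.fst ∈ IsLocalRing.maximalIdeal A₁} ∧ M ^ 2 = ⊥ := by
  have hsq := TrivSqZeroExt.maximalIdeal_sq_eq_bot (R := A₁) (M := E₁) hm hkill
  refine ⟨isGaussianRing_of_maximalIdeal_sq_eq_bot hsq, fun M hM => ?_⟩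
  obtain rfl := IsLocalRing.eq_maximalIdeal hM
  exact ⟨Set.ext fun _ => TrivSqZeroExt.mem_maximalIdeal_iff, hsq⟩

/-- if `(A₁, m₁)` is local with `m₁² = 0` and `E₁` is a nonzero
`A₁/m₁`-vector space, then `A₁ ⋉ E₁` is Gaussian and its maximal ideal `m₁ ⋉ E₁`
squares to zero. -/
theorem trivSqZeroExt_gaussian_of_sq_zero
    (A₁ E₁ : Type*) [CommRing A₁] [IsLocalRing A₁]
    [AddCommGroup E₁] [Module A₁ E₁] [Module A₁ᵐᵒᵖ E₁] [IsCentralScalar A₁ E₁]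
    [Nontrivial E₁]
    (hkill : ∀ a ∈ IsLocalRing.maximalIdeal A₁, ∀ e : E₁, a • e = 0)
    (hm : (IsLocalRing.maximalIdeal A₁) ^ 2 = ⊥) :
    IsGaussianRing (TrivSqZeroExt A₁ E₁) ∧
      ∀ M : Ideal (TrivSqZeroExt A₁ E₁), M.IsMaximal →
        (M : Set (TrivSqZeroExt A₁ E₁)) =
          {x | x.fst ∈ IsLocalRing.maximalIdeal A₁} ∧ M ^ 2 = ⊥ :=
  trivSqZeroExt_gaussian_of_sq_zero_general A₁ E₁ hkill hm
end
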